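/- Let w be a fully commutative element of the affine Coxeter group W(Ã_n) whose affine length L(w) (the multiplicity of a_{n+1} in w) satisfies L(w) ≥ 2, and write w = u_1 a_{n+1} u_2 a_{n+1} ⋯ u_m a_{n+1} u_{m+1} with each u_i ∈ W(A_n) fully commutative. Then for every i with 2 ≤ i ≤ m, the element u_i is full, i.e., both σ_1 and σ_n belong to Supp(u_i). -/

import Mathlib

/-!
In a reduced word of a fully commutative element, two occurrences of a generator `s` must be
separated by a letter not commuting with `s`, and not by a single such letter `t` with
`m(s, t) = 3`: otherwise commutations turn `s ⋯ t ⋯ s` into a braid `s t s`, replacing it by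
`t s t` gives a reduced word with fewer `s`'s, whereas commutation equivalent words have the
same letter counts. So `t` occurs twice, and the argument recurses between those two occurrences one step
further along a path `s, t, …` of the Coxeter graph, until the path runs out. A middle factor
missing `σ₁` (resp. `σ_n`) has all its letters on the path `σ_n, …, σ₂` (resp. `σ₁, …, σ_{n-1}`)
hanging off `a_{n+1}`.
-/

open CoxeterSystem

/-- The Coxeter matrix of affine type Ãₙ: generators indexed by `Fin (n+1)` arranged in a
cycle (index `k` is `σ_{k+1}` for `k < n`, and index `n` is `a_{n+1}`); cyclically adjacent
generators braid with order 3, and all other pairs commute. -/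
def affineAMatrix (n : ℕ) : CoxeterMatrix (Fin (n + 1)) where
  M := Matrix.of fun i j : Fin (n + 1) =>
    if i = j then 1 else if i - j = 1 ∨ j - i = 1 then 3 else 2
  isSymm := by
    unfold Matrix.IsSymm
    ext i j
    simp only [Matrix.transpose_apply, Matrix.of_apply]
    by_cases h : i = j
    · simp [h]
    · simp [h, Ne.symm h, or_comm]
  diagonal := by simp
  off_diagonal := by aesop

def CommMove {B : Type*} (M : CoxeterMatrix B) (ω₁ ω₂ : List B) : Prop :=
  ∃ (l r : List B) (s t : B), M s t = 2 ∧ ω₁ = l ++ s :: t :: r ∧ ω₂ = l ++ t :: s :: r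

def CommEquiv {B : Type*} (M : CoxeterMatrix B) : List B → List B → Prop :=
  Relation.ReflTransGen (CommMove M)

def IsRedexOf {B W : Type*} [Group W] {M : CoxeterMatrix B} (cs : CoxeterSystem M W)
    (ω : List B) (w : W) : Prop :=
  cs.wordProd ω = w ∧ cs.IsReduced ω

def IsFC {B W : Type*} [Group W] {M : CoxeterMatrix B} (cs : CoxeterSystem M W) (w : W) : Prop :=
  ∀ ω₁ ω₂, IsRedexOf cs ω₁ w → IsRedexOf cs ω₂ w → CommEquiv M ω₁ ω₂

/-- The decreasing word `[i, i-1, ..., j]` of (1-based) generator subscripts. -/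
def decW (i j : ℕ) : List ℕ := (List.range' j (i + 1 - j)).reverse

/-- The increasing word `[i, i+1, ..., j]` of (1-based) generator subscripts. -/
def incW (i j : ℕ) : List ℕ := List.range' i (j + 1 - i)

section Coxeter

variable {B W : Type*} [Group W] {M : CoxeterMatrix B} {cs : CoxeterSystem M W}

theorem CommEquiv.perm {ω₁ ω₂ : List B} (h : CommEquiv M ω₁ ω₂) : ω₁.Perm ω₂ := by
  induction h with
  | refl => rfl
  | tail _ hmove ih =>
    obtain ⟨l, r, s, t, -, rfl, rfl⟩ := hmove
    exact ih.trans ((List.Perm.swap t s r).append_left l)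

namespace CoxeterSystem

theorem commute_simple_of_eq_two {s t : B} (h : M s t = 2) :
    Commute (cs.simple s) (cs.simple t) := by
  have := cs.wordProd_braidWord_eq s t
  rw [braidWord, braidWord, M.symmetric t s, h] at this
  simpa [alternatingWord, wordProd, Commute, SemiconjBy] using this

theorem simple_braid_of_eq_three {s t : B} (h : M s t = 3) :
    cs.simple s * cs.simple t * cs.simple s = cs.simple t * cs.simple s * cs.simple t := by
  have := cs.wordProd_braidWord_eq s t
  rw [braidWord, braidWord, M.symmetric t s, h] at this
  simpa [alternatingWord, wordProd, mul_assoc] using this.symm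

theorem commute_simple_wordProd {s : B} {ω : List B} (h : ∀ t ∈ ω, M s t = 2) :
    Commute (cs.simple s) (cs.wordProd ω) :=
  Commute.list_prod_right _ _ fun _ ht ↦ by
    obtain ⟨t, ht', rfl⟩ := List.mem_map.mp ht
    exact commute_simple_of_eq_two (h t ht')

theorem IsReduced.of_wordProd_eq {ω ω' : List B} (hω : cs.IsReduced ω)
    (hprod : cs.wordProd ω = cs.wordProd ω') (hlen : ω.length = ω'.length) :
    cs.IsReduced ω' := by
  rw [IsReduced, ← hprod, ← hlen]; exact hω

theorem not_isReduced_of_forall_eq_two {s : B} {l mid r : List B} (h : ∀ t ∈ mid, M s t = 2) :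
    ¬ cs.IsReduced (l ++ s :: (mid ++ s :: r)) := by
  intro hred
  have hprod : cs.wordProd (l ++ s :: (mid ++ s :: r)) = cs.wordProd (l ++ mid ++ r) := by
    simp only [wordProd_append, wordProd_cons, ← mul_assoc, (commute_simple_wordProd h).eq,
      simple_mul_simple_cancel_right]
  have := cs.length_wordProd_le (l ++ mid ++ r)
  rw [← hprod, hred] at this
  simp at this

end CoxeterSystem

theorem IsFC.not_isRedexOf_of_braid_between {w : W} (hw : IsFC cs w) {l a b r : List B}
    {s t : B} (hst : M s t = 3) (ha : ∀ x ∈ a, M s x = 2) (hb : ∀ x ∈ b, M s x = 2) :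
    ¬ IsRedexOf cs (l ++ s :: (a ++ t :: b ++ s :: r)) w := by
  classical
  rintro ⟨hprod, hred⟩
  have hprod' : cs.wordProd (l ++ s :: (a ++ t :: b ++ s :: r)) =
      cs.wordProd (l ++ a ++ t :: s :: t :: (b ++ r)) := by
    have hsa := (commute_simple_wordProd (cs := cs) ha).eq
    have hsb := (commute_simple_wordProd (cs := cs) hb).eq
    have hsts (x : W) : x * cs.simple s * cs.simple t * cs.simple s =
        x * cs.simple t * cs.simple s * cs.simple t := by
      simp only [mul_assoc x, cs.simple_braid_of_eq_three hst]
    simp only [wordProd_append, wordProd_cons, mul_assoc]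
    rw [← mul_assoc (cs.simple s) (cs.wordProd a), hsa, ← mul_assoc (cs.wordProd b), ← hsb]
    simp only [← mul_assoc, hsts]
  have hts : t ≠ s := by
    rintro rfl
    simp at hst
  have hcomm := hw _ _ ⟨hprod, hred⟩
    ⟨hprod'.symm.trans hprod, hred.of_wordProd_eq hprod' (by simp; omega)⟩
  have := hcomm.perm.count_eq s
  simp [hts] at this
  omega

theorem IsFC.exists_eq_append_cons_append_cons {w : W} (hw : IsFC cs w) {l mid r : List B}
    {s x : B} (hsx : M s x = 3) (hmid : ∀ t ∈ mid, M s t = 2 ∨ t = x)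
    (hred : IsRedexOf cs (l ++ s :: (mid ++ s :: r)) w) :
    ∃ a b c, mid = a ++ x :: (b ++ x :: c) ∧ x ∉ b := by
  have hcomm {u : List B} (hu : u ⊆ mid) (hxu : x ∉ u) : ∀ t ∈ u, M s t = 2 := fun t ht ↦
    (hmid t (hu ht)).resolve_right fun h ↦ hxu (h ▸ ht)
  by_cases hx : x ∈ mid
  swap
  · exact absurd hred.2 (not_isReduced_of_forall_eq_two (hcomm (List.Subset.refl _) hx))
  obtain ⟨a, m', rfl, hxa⟩ := List.eq_append_cons_of_mem hx
  by_cases hx' : x ∈ m'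
  swap
  · exact absurd (by simpa using hred) (hw.not_isRedexOf_of_braid_between hsx
      (hcomm (by simp) hxa) (hcomm (by simp) hx'))
  obtain ⟨b, c, rfl, hxb⟩ := List.eq_append_cons_of_mem hx'
  exact ⟨a, b, c, rfl, hxb⟩

theorem IsFC.not_isRedexOf_chain_between {w : W} (hw : IsFC cs w) (f : ℕ → B) (d : ℕ)
    (hadj : ∀ j < d, M (f j) (f (j + 1)) = 3)
    (hfar : ∀ j k, j + 2 ≤ k → k ≤ d → M (f j) (f k) = 2)
    {k : ℕ} {l mid r : List B} (hmid : ∀ t ∈ mid, ∃ j, k < j ∧ j ≤ d ∧ f j = t) :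
    ¬ IsRedexOf cs (l ++ f k :: (mid ++ f k :: r)) w := by
  induction hdk : d - k generalizing k l mid r with
  | zero =>
    refine fun hred ↦ not_isReduced_of_forall_eq_two (fun t ht ↦ ?_) hred.2
    obtain ⟨j, hkj, hjd, -⟩ := hmid t ht
    omega
  | succ e ih =>
    intro hred
    have hk : k < d := by omega
    have hmid' : ∀ t ∈ mid, M (f k) t = 2 ∨ t = f (k + 1) := by
      intro t ht
      obtain ⟨j, hkj, hjd, rfl⟩ := hmid t ht
      rcases (show j = k + 1 ∨ k + 2 ≤ j by omega) with rfl | hj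
      · exact Or.inr rfl
      · exact Or.inl (hfar k j hj hjd)
    obtain ⟨a, b, c, rfl, hxb⟩ := hw.exists_eq_append_cons_append_cons (hadj k hk) hmid' hred
    refine ih (k := k + 1) (l := l ++ f k :: a) (mid := b) (r := c ++ f k :: r)
      (fun t ht ↦ ?_) (by omega) (by simpa using hred)
    obtain ⟨j, hkj, hjd, rfl⟩ := hmid t (by simp [ht])
    refine ⟨j, lt_of_le_of_ne hkj ?_, hjd, rfl⟩
    rintro rfl
    exact hxb ht

end Coxeter

theorem Fin.ofNat_sub_ofNat_eq_one_iff {n a b : ℕ} (ha : a ≤ n) (hb : b ≤ n) :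
    Fin.ofNat (n + 1) a - Fin.ofNat (n + 1) b = 1 ↔ a = b + 1 ∨ (a = 0 ∧ b = n) := by
  rw [sub_eq_iff_eq_add, add_comm (1 : Fin (n + 1)), Fin.ext_iff, Fin.val_add_one]
  simp only [Fin.ext_iff, Fin.val_ofNat, Fin.val_last, Nat.mod_eq_of_lt (Nat.lt_succ_of_le ha),
    Nat.mod_eq_of_lt (Nat.lt_succ_of_le hb)]
  split_ifs <;> omega

theorem affineAMatrix_ofNat {n a b : ℕ} (ha : a ≤ n) (hb : b ≤ n) :
    affineAMatrix n (Fin.ofNat (n + 1) a) (Fin.ofNat (n + 1) b) =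
      if a = b then 1
      else if a = b + 1 ∨ b = a + 1 ∨ (a = 0 ∧ b = n) ∨ (b = 0 ∧ a = n) then 3 else 2 := by
  simp only [affineAMatrix, Matrix.of_apply, Fin.ofNat_sub_ofNat_eq_one_iff ha hb,
    Fin.ofNat_sub_ofNat_eq_one_iff hb ha]
  simp only [Fin.ext_iff, Fin.val_ofNat, Nat.mod_eq_of_lt (Nat.lt_succ_of_le ha),
    Nat.mod_eq_of_lt (Nat.lt_succ_of_le hb)]
  split_ifs <;> omega

section AffineA

variable {n : ℕ} {W : Type*} [Group W] {cs : CoxeterSystem (affineAMatrix n) W} {w : W}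

theorem IsFC.zero_mem_of_isRedexOf_affine (hw : IsFC cs w) {l r : List (Fin (n + 1))}
    {u : List ℕ} (hu : ∀ k ∈ u, k < n)
    (hred : IsRedexOf cs (l ++ Fin.ofNat (n + 1) n ::
      (u.map (fun k ↦ Fin.ofNat (n + 1) k) ++ Fin.ofNat (n + 1) n :: r)) w) :
    0 ∈ u := by
  by_contra h0
  -- the path `a_{n+1}, σ_n, …, σ₂`
  refine hw.not_isRedexOf_chain_between (fun j ↦ Fin.ofNat (n + 1) (n - j)) (n - 1)
    (fun j hj ↦ ?_) (fun j k hjk hk ↦ ?_) (k := 0) (fun t ht ↦ ?_) hred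
  · rw [affineAMatrix_ofNat (by omega) (by omega)]
    split_ifs <;> omega
  · rw [affineAMatrix_ofNat (by omega) (by omega)]
    split_ifs <;> omega
  · obtain ⟨k, hk, rfl⟩ := List.mem_map.mp ht
    have : k ≠ 0 := fun h ↦ h0 (h ▸ hk)
    have := hu k hk
    exact ⟨n - k, by omega, by omega, by congr 1; omega⟩

theorem IsFC.sub_one_mem_of_isRedexOf_affine (hw : IsFC cs w) {l r : List (Fin (n + 1))}
    {u : List ℕ} (hu : ∀ k ∈ u, k < n)
    (hred : IsRedexOf cs (l ++ Fin.ofNat (n + 1) n ::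
      (u.map (fun k ↦ Fin.ofNat (n + 1) k) ++ Fin.ofNat (n + 1) n :: r)) w) :
    n - 1 ∈ u := by
  by_contra h0
  -- the path `a_{n+1}, σ₁, …, σ_{n-1}`
  refine hw.not_isRedexOf_chain_between
    (fun j ↦ Fin.ofNat (n + 1) (if j = 0 then n else j - 1)) (n - 1)
    (fun j hj ↦ ?_) (fun j k hjk hk ↦ ?_) (k := 0) (fun t ht ↦ ?_) hred
  · rw [affineAMatrix_ofNat (by split_ifs <;> omega) (by split_ifs <;> omega)]
    grind
  · rw [affineAMatrix_ofNat (by split_ifs <;> omega) (by split_ifs <;> omega)]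
    grind
  · obtain ⟨k, hk, rfl⟩ := List.mem_map.mp ht
    have : k ≠ n - 1 := fun h ↦ h0 (h ▸ hk)
    have := hu k hk
    exact ⟨k + 1, by omega, by omega, by simp⟩

end AffineA

theorem List.exists_flatMap_range_eq_append_cons {α : Type*} (g : ℕ → List α) (c : α)
    {m i : ℕ} (hi : 1 ≤ i) (him : i < m) :
    ∃ L R, (List.range m).flatMap (fun j ↦ g j ++ [c]) = L ++ c :: (g i ++ c :: R) := by
  obtain ⟨p, rfl⟩ := Nat.exists_eq_add_of_le' hi
  obtain ⟨q, rfl⟩ := Nat.exists_eq_add_of_lt him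
  refine ⟨(List.range p).flatMap (fun j ↦ g j ++ [c]) ++ g p,
    ((List.range q).map (p + 1 + 1 + ·)).flatMap (fun j ↦ g j ++ [c]), ?_⟩
  rw [show p + 1 + q + 1 = p + 1 + 1 + q by omega, List.range_add, List.range_succ,
    List.range_succ]
  simp

theorem middle_factors_full_general (n : ℕ) {W : Type*} [Group W]
    (cs : CoxeterSystem (affineAMatrix n) W) (w : W) (hw : IsFC cs w)
    (m : ℕ) (vs : ℕ → List ℕ)
    (hvs : ∀ i, i ≤ m → ∀ k ∈ vs i, k < n)
    (hred : IsRedexOf cs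
      ((((List.range m).flatMap fun i => vs i ++ [n]) ++ vs m).map
        fun k => (Fin.ofNat (n + 1) k : Fin (n + 1))) w) :
    ∀ i, 1 ≤ i → i < m → (0 ∈ vs i ∧ n - 1 ∈ vs i) := by
  intro i hi him
  obtain ⟨L, R, hsplit⟩ := List.exists_flatMap_range_eq_append_cons vs n hi him
  rw [hsplit] at hred
  simp only [List.append_assoc, List.cons_append, List.map_append, List.map_cons] at hred
  exact ⟨hw.zero_mem_of_isRedexOf_affine (hvs i him.le) hred,
    hw.sub_one_mem_of_isRedexOf_affine (hvs i him.le) hred⟩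

/-- If a fully commutative `w ∈ W(Ãₙ)` has affine length `m ≥ 2`, i.e. it has a reduced
expression `u₁ a_{n+1} u₂ a_{n+1} ⋯ u_m a_{n+1} u_{m+1}` with each `u_i` a word in the
generators `σ_1, …, σ_n` (0-based indices `< n`), then each middle factor `u_i`
(`2 ≤ i ≤ m`) is full: both `σ_1` (index `0`) and `σ_n` (index `n-1`) appear in it. -/
theorem middle_factors_full (n : ℕ) (hn : 2 ≤ n) {W : Type*} [Group W]
    (cs : CoxeterSystem (affineAMatrix n) W) (w : W) (hw : IsFC cs w)
    (m : ℕ) (hm : 2 ≤ m) (vs : ℕ → List ℕ)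
    (hvs : ∀ i, i ≤ m → ∀ k ∈ vs i, k < n)
    (hred : IsRedexOf cs
      ((((List.range m).flatMap fun i => vs i ++ [n]) ++ vs m).map
        fun k => (Fin.ofNat (n + 1) k : Fin (n + 1))) w) :
    ∀ i, 1 ≤ i → i < m → (0 ∈ vs i ∧ n - 1 ∈ vs i) :=
  middle_factors_full_general n cs w hw m vs hvs hred
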